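/- arXiv:2605.00001 — 4 statements merged into one kernel-verified Lean document; each statement's English description precedes it below -/
import Mathlib

section
/- Let a < b < c be reals and κ > 0. Define θ_A = κ(c-b), θ_B = κ(a-c), θ_C = κ(b-a), and ω = κ(b-a)(c-b)(c-a)/(a² + b² + c² - ab - bc - ca). Then 1/ω = 1/θ_A + 1/θ_B + 1/θ_C. -/
/-! Clearing denominators, the sum of the reciprocals of the three cyclic differences
`c - b`, `a - c`, `b - a` is `(a² + b² + c² - ab - bc - ca) / ((b - a)(c - b)(c - a))`;
since every parabolic angle carries the same factor `κ`, inverting gives the Brocard angle. -/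

theorem one_div_sub_add_one_div_sub_add_one_div_sub {K : Type*} [Field K] {a b c : K}
    (hab : a ≠ b) (hbc : b ≠ c) (hca : c ≠ a) :
    1 / (c - b) + 1 / (a - c) + 1 / (b - a)
      = (a^2 + b^2 + c^2 - a*b - b*c - c*a) / ((b - a) * (c - b) * (c - a)) := by
  have hba : b - a ≠ 0 := sub_ne_zero.mpr hab.symm
  have hcb : c - b ≠ 0 := sub_ne_zero.mpr hbc.symm
  have hac : a - c ≠ 0 := sub_ne_zero.mpr hca.symm
  have hca' : c - a ≠ 0 := sub_ne_zero.mpr hca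
  field_simp
  ring

theorem da_brocard_cotangent_general (a b c κ : ℝ) (hab : a < b) (hbc : b < c) :
    1 / (κ*(b - a)*(c - b)*(c - a) / (a^2 + b^2 + c^2 - a*b - b*c - c*a))
      = 1 / (κ*(c - b)) + 1 / (κ*(a - c)) + 1 / (κ*(b - a)) := by
  have hsum := one_div_sub_add_one_div_sub_add_one_div_sub hab.ne hbc.ne (hab.trans hbc).ne'
  calc 1 / (κ*(b - a)*(c - b)*(c - a) / (a^2 + b^2 + c^2 - a*b - b*c - c*a))
      = κ⁻¹ * ((a^2 + b^2 + c^2 - a*b - b*c - c*a) / ((b - a) * (c - b) * (c - a))) := by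
        rw [one_div_div, show κ*(b - a)*(c - b)*(c - a) = κ * ((b - a) * (c - b) * (c - a)) by ring,
          ← div_div]
        ring
    _ = κ⁻¹ * (1 / (c - b) + 1 / (a - c) + 1 / (b - a)) := by rw [hsum]
    _ = 1 / (κ*(c - b)) + 1 / (κ*(a - c)) + 1 / (κ*(b - a)) := by
        simp only [one_div, mul_inv]
        ring

theorem da_brocard_cotangent (a b c κ : ℝ) (hab : a < b) (hbc : b < c)
    (hκ : 0 < κ) :
    1 / (κ*(b - a)*(c - b)*(c - a) / (a^2 + b^2 + c^2 - a*b - b*c - c*a))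
      = 1 / (κ*(c - b)) + 1 / (κ*(a - c)) + 1 / (κ*(b - a)) :=
  da_brocard_cotangent_general a b c κ hab hbc
end

section
/- Let a < b < c be reals, κ > 0, and for u ∈ ℝ consider lines BC': y = κ(b+c+u)x - κb(c+u) and CA': y = κ(c+a+u)x - κc(a+u) and AB': y = κ(a+b+u)x - κa(b+u). The intersection of BC' and CA' has x-coordinate c + u(b-c)/(b-a), the intersection of CA' and AB' has x-coordinate a + u(c-a)/(c-b), and these two x-coordinates coincide if and only if u = (b-a)(c-b)(c-a)/(a² + b² + c² - ab - bc - ca). -/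
theorem da_brocard_point (a b c κ u : ℝ) (hab : a < b) (hbc : b < c)
    (hκ : 0 < κ) :
    (∀ x : ℝ, κ*(b + c + u)*x - κ*b*(c + u) = κ*(c + a + u)*x - κ*c*(a + u)
        ↔ x = c + u*(b - c)/(b - a)) ∧
    (∀ x : ℝ, κ*(c + a + u)*x - κ*c*(a + u) = κ*(a + b + u)*x - κ*a*(b + u)
        ↔ x = a + u*(c - a)/(c - b)) ∧
    (c + u*(b - c)/(b - a) = a + u*(c - a)/(c - b)
        ↔ u = (b - a)*(c - b)*(c - a)/(a^2 + b^2 + c^2 - a*b - b*c - c*a)) := by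
  have hba : b - a ≠ 0 := by linarith
  have hcb : c - b ≠ 0 := by linarith
  have hκ0 : κ ≠ 0 := ne_of_gt hκ
  have hQ : a^2 + b^2 + c^2 - a*b - b*c - c*a ≠ 0 := by nlinarith [sq_nonneg (a-b), sq_nonneg (b-c), sq_nonneg (c-a)]
  refine ⟨fun x => ?_, fun x => ?_, ?_⟩
  · constructor
    · intro h
      have : κ * (b - a) * x = κ * (b - a) * (c + u * (b - c) / (b - a)) := by
        field_simp; nlinarith [h]
      exact mul_left_cancel₀ (mul_ne_zero hκ0 hba) this
    · intro h; rw [h]; field_simp; ring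
  · constructor
    · intro h
      have : κ * (c - b) * x = κ * (c - b) * (a + u * (c - a) / (c - b)) := by
        field_simp; nlinarith [h]
      exact mul_left_cancel₀ (mul_ne_zero hκ0 hcb) this
    · intro h; rw [h]; field_simp; ring
  · constructor
    · intro h
      rw [eq_div_iff hQ]
      field_simp at h
      nlinarith [h]
    · intro h
      rw [h]
      field_simp
      have hQ' : a ^ 2 + b ^ 2 + c ^ 2 - b * a - c * b - c * a ≠ 0 := by convert hQ using 1; ring
      rw [add_div' _ _ _ hQ', add_div' _ _ _ hQ', div_left_inj' hQ']
      ring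
end

section
/- Let a < b < c be reals, κ > 0, and let S = (κ/2)(b-a)(c-b)(c-a) and ω = 2κ(b-a)(c-b)(c-a)/((b-a)² + (c-b)² + (a-c)²). Then ω = 4S/((b-a)² + (c-b)² + (c-a)²) and ω = 2S/√((c-a)²(b-a)² + (c-b)²(b-a)² + (c-b)²(c-a)²). -/
theorem da_brocard_trig (a b c κ S ω : ℝ) (hab : a < b) (hbc : b < c)
    (hκ : 0 < κ)
    (hS : S = (κ/2)*(b - a)*(c - b)*(c - a))
    (hω : ω = 2*κ*(b - a)*(c - b)*(c - a) / ((b - a)^2 + (c - b)^2 + (a - c)^2)) :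
    ω = 4*S / ((b - a)^2 + (c - b)^2 + (c - a)^2) ∧
    ω = 2*S / Real.sqrt ((c - a)^2*(b - a)^2 + (c - b)^2*(b - a)^2 + (c - b)^2*(c - a)^2) := by
  have h1 : (a - c)^2 = (c - a)^2 := by ring
  constructor
  · rw [hω, hS, h1]; ring_nf
  · have hE : 0 ≤ (b - a)^2 + (b - a)*(c - b) + (c - b)^2 := by nlinarith
    have hX : (c - a)^2*(b - a)^2 + (c - b)^2*(b - a)^2 + (c - b)^2*(c - a)^2
        = ((b - a)^2 + (b - a)*(c - b) + (c - b)^2)^2 := by ring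
    rw [hX, Real.sqrt_sq hE, hω, hS, h1]
    have hD : (b - a)^2 + (c - b)^2 + (c - a)^2
        = 2*((b - a)^2 + (b - a)*(c - b) + (c - b)^2) := by ring
    rw [hD]
    have hE' : (0:ℝ) < (b - a)^2 + (b - a)*(c - b) + (c - b)^2 := by nlinarith
    field_simp
end

section
/- For real angles θ_L, θ_M with tan θ_L = m_L and tan θ_M = m_M defined, the cross ratio of (m_L, m_M; i, -i) in ℂ, namely ((m_L - i)(m_M + i))/((m_L + i)(m_M - i)), equals e^{2i(θ_L - θ_M)}. -/
open Complex

theorem laguerre_angle_formula (θL θM : ℝ)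
    (hL : Real.cos θL ≠ 0) (hM : Real.cos θM ≠ 0) :
    ((Real.tan θL : ℂ) - I) * ((Real.tan θM : ℂ) + I)
      / (((Real.tan θL : ℂ) + I) * ((Real.tan θM : ℂ) - I))
      = Complex.exp (2 * I * ((θL : ℂ) - (θM : ℂ))) := by
  have key : ∀ θ : ℝ, Real.cos θ ≠ 0 →
      ((Real.tan θ : ℂ) - I = -I * Complex.exp ((θ : ℂ) * I) / Real.cos θ ∧
       (Real.tan θ : ℂ) + I = I * (Complex.exp ((θ : ℂ) * I))⁻¹ / Real.cos θ) := by
    intro θ hθ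
    have hc : Complex.cos (θ : ℂ) ≠ 0 := by
      rw [← Complex.ofReal_cos]; exact_mod_cast hθ
    rw [Real.tan_eq_sin_div_cos, ← Complex.exp_neg, Complex.exp_mul_I,
      ← neg_mul, Complex.exp_mul_I]
    push_cast
    rw [Complex.cos_neg, Complex.sin_neg]
    constructor <;> field_simp <;> linear_combination (Complex.sin ↑θ) * Complex.I_sq
  have hLc : (Real.cos θL : ℂ) ≠ 0 := by exact_mod_cast hL
  have hMc : (Real.cos θM : ℂ) ≠ 0 := by exact_mod_cast hM
  obtain ⟨eL1, eL2⟩ := key θL hL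
  obtain ⟨eM1, eM2⟩ := key θM hM
  have hexp : 2 * I * ((θL : ℂ) - (θM : ℂ))
      = (θL : ℂ) * I + (θL : ℂ) * I + (-((θM : ℂ) * I) + -((θM : ℂ) * I)) := by ring
  rw [eL1, eL2, eM1, eM2, hexp, Complex.exp_add, Complex.exp_add, Complex.exp_add,
    Complex.exp_neg]
  have h1 := Complex.exp_ne_zero ((θL : ℂ) * I)
  have h4 := Complex.exp_ne_zero ((θM : ℂ) * I)
  have hLc' : Complex.cos (θL : ℂ) ≠ 0 := by
    rw [← Complex.ofReal_cos]; exact_mod_cast hL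
  have hMc' : Complex.cos (θM : ℂ) ≠ 0 := by
    rw [← Complex.ofReal_cos]; exact_mod_cast hM
  field_simp [hLc', hMc', h1, h4, Complex.I_ne_zero]
end
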